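/- Suppose a learner makes T adaptive statistical queries, each a function q : {-1,1}^n → [-1,1], and after each query an adversary may return any value within τ of E_{x}[q(x)·χ_S(x)] (for the hidden k-subset S). If T < τ²·C(n,k), then there exists a k-subset S and adversarial responses (namely, responding 0 whenever |E[q·χ_S]| < τ) such that all T responses are identical for the hidden parity χ_S and carry no information distinguishing S. -/
import Mathlib


open Finset
open scoped Classical

/-- The sign ±1 encoding of a Boolean coordinate. -/
noncomputable def sgn (b : Bool) : ℝ := if b then 1 else -1

/-- Parity (Fourier character) χ_S(x) = ∏_{i∈S} x_i on the hypercube {-1,1}^n. -/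
noncomputable def chi {n : ℕ} (S : Finset (Fin n)) (x : Fin n → Bool) : ℝ :=
  ∏ i ∈ S, sgn (x i)

/-- Expectation over the uniform distribution on {-1,1}^n. -/
noncomputable def Exp {n : ℕ} (f : (Fin n → Bool) → ℝ) : ℝ :=
  (∑ x : Fin n → Bool, f x) / 2 ^ n

lemma sgn_mul_self (b : Bool) : sgn b * sgn b = 1 := by
  cases b <;> simp [sgn]

lemma sgn_mul_ne {b c : Bool} (h : b ≠ c) : sgn b * sgn c = -1 := by
  cases b <;> cases c <;> simp_all [sgn]

lemma sum_chi_mul {n : ℕ} (x y : Fin n → Bool) :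
    ∑ S : Finset (Fin n), chi S x * chi S y = if x = y then (2:ℝ)^n else 0 := by
  have hrw : ∀ S : Finset (Fin n), chi S x * chi S y
      = ∏ i ∈ S, (sgn (x i) * sgn (y i)) := by
    intro S; simp [chi, Finset.prod_mul_distrib]
  have key : ∏ i : Fin n, (sgn (x i) * sgn (y i) + 1)
      = ∑ S : Finset (Fin n), chi S x * chi S y := by
    rw [Finset.prod_add]
    simp only [Finset.prod_const_one, mul_one, Finset.powerset_univ]
    exact Finset.sum_congr rfl fun S _ => (hrw S).symm
  rw [← key]
  by_cases h : x = y
  · subst h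
    simp [sgn_mul_self]
    norm_num
  · simp only [if_neg h]
    obtain ⟨j, hj⟩ : ∃ j, x j ≠ y j := by
      by_contra hc; push_neg at hc; exact h (funext hc)
    apply Finset.prod_eq_zero (Finset.mem_univ j)
    rw [sgn_mul_ne hj]; ring

lemma parseval {n : ℕ} (f : (Fin n → Bool) → ℝ) (hf : ∀ x, |f x| ≤ 1) :
    ∑ S : Finset (Fin n), (Exp fun x => f x * chi S x) ^ 2 ≤ 1 := by
  have h2n : (0:ℝ) < 2 ^ n := by positivity
  have expand : ∑ S : Finset (Fin n), (∑ x : Fin n → Bool, f x * chi S x) ^ 2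
      = ∑ x : Fin n → Bool, f x ^ 2 * 2 ^ n := by
    have : ∀ S : Finset (Fin n), (∑ x : Fin n → Bool, f x * chi S x) ^ 2
        = ∑ x : Fin n → Bool, ∑ y : Fin n → Bool,
            f x * f y * (chi S x * chi S y) := by
      intro S
      rw [sq, Finset.sum_mul_sum]
      exact Finset.sum_congr rfl fun x _ => Finset.sum_congr rfl fun y _ => by ring
    simp_rw [this]
    rw [Finset.sum_comm]
    have : ∀ x : Fin n → Bool, ∑ S : Finset (Fin n), ∑ y : Fin n → Bool,
        f x * f y * (chi S x * chi S y) = f x ^ 2 * 2 ^ n := by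
      intro x
      rw [Finset.sum_comm]
      have : ∀ y : Fin n → Bool, ∑ S : Finset (Fin n),
          f x * f y * (chi S x * chi S y)
          = f x * f y * (if x = y then (2:ℝ)^n else 0) := by
        intro y
        rw [← Finset.mul_sum, sum_chi_mul]
      simp_rw [this]
      simp [mul_ite, mul_zero, sq]
    exact Finset.sum_congr rfl fun x _ => this x
  have hbound : ∑ x : Fin n → Bool, f x ^ 2 * (2:ℝ) ^ n ≤ 2 ^ n * 2 ^ n := by
    calc ∑ x : Fin n → Bool, f x ^ 2 * (2:ℝ) ^ n
        ≤ ∑ _x : Fin n → Bool, 1 * (2:ℝ) ^ n := by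
          apply Finset.sum_le_sum
          intro x _
          have := hf x
          have : f x ^ 2 ≤ 1 := by
            have := abs_le.mp (hf x)
            nlinarith
          nlinarith
      _ = 2 ^ n * 2 ^ n := by
          simp [Finset.card_univ]
  calc ∑ S : Finset (Fin n), (Exp fun x => f x * chi S x) ^ 2
      = (∑ S : Finset (Fin n), (∑ x : Fin n → Bool, f x * chi S x) ^ 2) / (2^n * 2^n) := by
        unfold Exp
        rw [Finset.sum_div]
        exact Finset.sum_congr rfl fun S _ => by rw [div_pow]; ring_nf
    _ ≤ 1 := by
        rw [expand, div_le_one (by positivity)]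
        exact hbound

theorem stmt9 {n k T : ℕ} (τ : ℝ) (hτ : 0 < τ)
    (q : Fin T → (Fin n → Bool) → ℝ) (hq : ∀ t x, |q t x| ≤ 1)
    (hT : (T : ℝ) < τ ^ 2 * n.choose k) :
    ∃ S : Finset (Fin n), S.card = k ∧
      ∀ t, |Exp fun x => q t x * chi S x| < τ := by
  set A : Finset (Finset (Fin n)) := Finset.univ.filter (fun S => S.card = k) with hA
  have hAcard : A.card = n.choose k := by
    rw [hA]
    have : Finset.univ.filter (fun S : Finset (Fin n) => S.card = k)
        = Finset.powersetCard k (Finset.univ : Finset (Fin n)) := by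
      ext S; simp [Finset.mem_powersetCard_univ]
    rw [this, Finset.card_powersetCard, Finset.card_univ, Fintype.card_fin]
  set B : Finset (Finset (Fin n)) :=
    A.filter (fun S => ∃ t, τ ≤ |Exp fun x => q t x * chi S x|) with hB
  have hkey : (B.card : ℝ) * τ ^ 2 ≤ T := by
    have hstep : ∀ S ∈ B, τ ^ 2 ≤ ∑ t : Fin T, (Exp fun x => q t x * chi S x) ^ 2 := by
      intro S hS
      rw [hB, Finset.mem_filter] at hS
      obtain ⟨t, ht⟩ := hS.2
      calc τ ^ 2 ≤ (Exp fun x => q t x * chi S x) ^ 2 := by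
            have h1 : τ ^ 2 ≤ |Exp fun x => q t x * chi S x| ^ 2 :=
              pow_le_pow_left₀ hτ.le ht 2
            rwa [sq_abs] at h1
        _ ≤ ∑ t : Fin T, (Exp fun x => q t x * chi S x) ^ 2 :=
            Finset.single_le_sum
              (f := fun t => (Exp fun x => q t x * chi S x) ^ 2)
              (fun t _ => sq_nonneg _) (Finset.mem_univ t)
    calc (B.card : ℝ) * τ ^ 2
        = ∑ _S ∈ B, τ ^ 2 := by rw [Finset.sum_const, nsmul_eq_mul]
      _ ≤ ∑ S ∈ B, ∑ t : Fin T, (Exp fun x => q t x * chi S x) ^ 2 :=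
          Finset.sum_le_sum hstep
      _ ≤ ∑ S : Finset (Fin n), ∑ t : Fin T, (Exp fun x => q t x * chi S x) ^ 2 := by
          apply Finset.sum_le_sum_of_subset_of_nonneg (Finset.subset_univ _)
          intro S _ _
          exact Finset.sum_nonneg fun t _ => sq_nonneg _
      _ = ∑ t : Fin T, ∑ S : Finset (Fin n), (Exp fun x => q t x * chi S x) ^ 2 :=
          Finset.sum_comm
      _ ≤ ∑ _t : Fin T, 1 := Finset.sum_le_sum fun t _ => parseval (q t) (hq t)
      _ = T := by simp
  have hBlt : (B.card : ℝ) < n.choose k := by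
    by_contra hc
    push_neg at hc
    have : τ ^ 2 * (n.choose k : ℝ) ≤ (B.card : ℝ) * τ ^ 2 := by nlinarith
    linarith
  have hBA : B ⊆ A := Finset.filter_subset _ _
  have : B ⊂ A := by
    refine (Finset.ssubset_iff_subset_ne).mpr ⟨hBA, ?_⟩
    intro h
    rw [h, hAcard] at hBlt
    exact lt_irrefl _ hBlt
  obtain ⟨S, hSA, hSB⟩ := Finset.exists_of_ssubset this
  rw [hA, Finset.mem_filter] at hSA
  refine ⟨S, hSA.2, fun t => ?_⟩
  by_contra hc
  push_neg at hc
  apply hSB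
  rw [hB, Finset.mem_filter]
  exact ⟨Finset.mem_filter.mpr hSA, ⟨t, hc⟩⟩
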